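/- arXiv:1110.6572 — 4 statements merged into one kernel-verified Lean document; each statement's English description precedes it below -/
import Mathlib

section
/- Suppose h : ℝ → ℝ is twice continuously differentiable on (−∞, a), h'' ≥ 0 on (−∞, a), and h''(x)/e^{−λ₂x} → 0 as x → −∞ (with λ₂ > 0). Then for λ₁ > 0, the ratio (∫ₓᵃ e^{−λ₁(y−a)} h''(y) dy) / e^{−(λ₁+λ₂)(x−a)} tends to 0 as x → −∞. -/
/-! With `μ = λ₁ + λ₂`, the hypothesis on `h''` says that the integrand `e^{-λ₁(y-a)} h''(y)` is
`o(e^{-μy})` as `y → -∞`, and integrating from `x` preserves this: the part of `∫ₓᵃ` below a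
fixed point `X` is at most `ε ∫ₓ^X e^{-μy} dy ≤ (ε/μ) e^{-μx}`, while the part above `X` is a
constant, negligible against `e^{-μx} → ∞`. -/

open Real Filter Set

open Asymptotics intervalIntegral
open MeasureTheory (volume)

theorem integral_exp_neg_mul {μ : ℝ} (hμ : μ ≠ 0) (x X : ℝ) :
    ∫ y in x..X, exp (-μ * y) = (exp (-μ * x) - exp (-μ * X)) / μ := by
  rw [integral_comp_mul_left (fun y => exp y) (neg_ne_zero.2 hμ), integral_exp, smul_eq_mul]
  field_simp
  ring

theorem norm_integral_le_of_norm_le_mul_exp {f : ℝ → ℝ} {μ c x X : ℝ} (hμ : 0 < μ)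
    (hc : 0 ≤ c) (hxX : x ≤ X) (hf : ∀ y ∈ Ioc x X, ‖f y‖ ≤ c * exp (-μ * y)) :
    ‖∫ y in x..X, f y‖ ≤ c / μ * exp (-μ * x) := by
  have hexp : Continuous fun y => c * exp (-μ * y) := by fun_prop
  calc ‖∫ y in x..X, f y‖ ≤ ∫ y in x..X, c * exp (-μ * y) :=
        norm_integral_le_of_norm_le hxX (MeasureTheory.ae_of_all _ hf) (hexp.intervalIntegrable x X)
    _ = c / μ * (exp (-μ * x) - exp (-μ * X)) := by
        rw [integral_const_mul, integral_exp_neg_mul hμ.ne']; ring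
    _ ≤ c / μ * exp (-μ * x) := by
        gcongr
        exact sub_le_self _ (exp_pos _).le

theorem tendsto_exp_neg_mul_atBot {μ : ℝ} (hμ : 0 < μ) :
    Tendsto (fun x => exp (-μ * x)) atBot atTop :=
  tendsto_exp_atTop.comp (tendsto_id.const_mul_atBot_of_neg (neg_neg_of_pos hμ))

theorem const_isLittleO_exp_neg_mul_atBot {μ : ℝ} (hμ : 0 < μ) (C : ℝ) :
    (fun _ : ℝ => C) =o[atBot] fun x => exp (-μ * x) :=
  isLittleO_const_left.2 <| Or.inr <| tendsto_norm_atTop_atTop.comp (tendsto_exp_neg_mul_atBot hμ)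

theorem isLittleO_integral_of_isLittleO_exp {f : ℝ → ℝ} {μ b : ℝ} (hμ : 0 < μ)
    (hf : ∀ x ≤ b, IntervalIntegrable f volume x b) (hfo : f =o[atBot] fun y => exp (-μ * y)) :
    (fun x => ∫ y in x..b, f y) =o[atBot] fun x => exp (-μ * x) := by
  refine isLittleO_iff_forall_isBigOWith.2 fun c hc => ?_
  obtain ⟨X, hX⟩ := eventually_atBot.1 <|
    (hfo.def (half_pos (mul_pos hc hμ))).and (eventually_le_atBot b)
  have hhead : IsBigOWith (c / 2) atBot (fun x => ∫ y in x..X, f y) fun x => exp (-μ * x) := by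
    refine .of_bound ?_
    filter_upwards [eventually_le_atBot X] with x hx
    rw [norm_of_nonneg (exp_pos _).le]
    convert norm_integral_le_of_norm_le_mul_exp hμ (half_pos (mul_pos hc hμ)).le hx
      fun y hy => by simpa [norm_of_nonneg (exp_pos _).le] using (hX y hy.2).1 using 1
    field_simp
  refine (hhead.add_isLittleO (const_isLittleO_exp_neg_mul_atBot hμ (∫ y in X..b, f y))
    (half_lt_self hc)).congr' rfl ?_ EventuallyEq.rfl
  filter_upwards [eventually_le_atBot X] with x hx
  have hXb := (hX X le_rfl).2
  exact integral_add_adjacent_intervals ((hf x (hx.trans hXb)).trans (hf X hXb).symm) (hf X hXb)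

theorem isLittleO_integral_of_isLittleO_exp_of_continuousOn_Iio {f : ℝ → ℝ} {μ a : ℝ} (hμ : 0 < μ)
    (hf : ContinuousOn f (Iio a)) (hfo : f =o[atBot] fun y => exp (-μ * y)) :
    (fun x => ∫ y in x..a, f y) =o[atBot] fun x => exp (-μ * x) := by
  have hf' : ∀ x ≤ a - 1, IntervalIntegrable f volume x (a - 1) := fun x hx =>
    (hf.mono <| uIcc_of_le hx ▸
      Icc_subset_Iic_self.trans (Iic_subset_Iio.2 (sub_one_lt a))).intervalIntegrable
  have hhead := isLittleO_integral_of_isLittleO_exp hμ hf' hfo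
  by_cases htail : IntervalIntegrable f volume (a - 1) a
  · refine (hhead.add (const_isLittleO_exp_neg_mul_atBot hμ (∫ y in (a - 1)..a, f y))).congr'
      ?_ EventuallyEq.rfl
    filter_upwards [eventually_le_atBot (a - 1)] with x hx
    exact integral_add_adjacent_intervals (hf' x hx) htail
  · -- If `f` is not integrable up to `a`, the interval integral takes its junk value `0`.
    refine (isLittleO_zero _ _).congr' ?_ EventuallyEq.rfl
    filter_upwards [eventually_le_atBot (a - 1)] with x hx
    exact (integral_undef fun hxa => htail ((hf' x hx).symm.trans hxa)).symm

theorem ratio_tendsto_zero_atBot_general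
    (a lam1 lam2 : ℝ) (hlam1 : 0 < lam1) (hlam2 : 0 < lam2)
    (h'' : ℝ → ℝ)
    (hcont : ContinuousOn h'' (Set.Iio a))
    (hlim : Tendsto (fun x => h'' x * Real.exp (lam2 * x)) atBot (nhds 0)) :
    Tendsto
      (fun x => (∫ y in x..a, Real.exp (-lam1 * (y - a)) * h'' y) /
        Real.exp (-(lam1 + lam2) * (x - a))) atBot (nhds 0) := by
  have hμ : 0 < lam1 + lam2 := add_pos hlam1 hlam2
  have hfo : (fun y => exp (-lam1 * (y - a)) * h'' y) =o[atBot]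
      fun y => exp (-(lam1 + lam2) * y) := by
    refine (isLittleO_iff_tendsto' (.of_forall fun y hy => absurd hy (exp_ne_zero _))).2 ?_
    convert hlim.const_mul (exp (lam1 * a)) using 2 with y
    · have hexp : exp (-lam1 * (y - a)) =
          exp (lam1 * a) * exp (lam2 * y) * exp (-(lam1 + lam2) * y) := by
        rw [← exp_add, ← exp_add]; ring_nf
      rw [hexp]
      field_simp
    · simp
  have hF := isLittleO_integral_of_isLittleO_exp_of_continuousOn_Iio hμ
    ((continuous_exp.comp (by fun_prop)).continuousOn.mul hcont) hfo
  refine (hF.trans_isBigO (IsBigO.of_bound (exp ((lam1 + lam2) * -a)) ?_)).tendsto_div_nhds_zero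
  refine .of_forall fun x => ?_
  rw [norm_of_nonneg (exp_pos _).le, norm_of_nonneg (exp_pos _).le, ← exp_add]
  exact (congrArg exp (by ring)).le

theorem ratio_tendsto_zero_atBot
    (a lam1 lam2 : ℝ) (hlam1 : 0 < lam1) (hlam2 : 0 < lam2)
    (h h' h'' : ℝ → ℝ)
    (hd1 : ∀ x < a, HasDerivAt h (h' x) x)
    (hd2 : ∀ x < a, HasDerivAt h' (h'' x) x)
    (hcont : ContinuousOn h'' (Set.Iio a))
    (hpos : ∀ x < a, 0 ≤ h'' x)
    (hlim : Tendsto (fun x => h'' x * Real.exp (lam2 * x)) atBot (nhds 0)) :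
    Tendsto
      (fun x => (∫ y in x..a, Real.exp (-lam1 * (y - a)) * h'' y) /
        Real.exp (-(lam1 + lam2) * (x - a))) atBot (nhds 0) :=
  ratio_tendsto_zero_atBot_general a lam1 lam2 hlam1 hlam2 h'' hcont hlim
end

section
/- Under the stated hypotheses on h, if ∫ₐ^∞ e^{−λ₁(y−a)} h''(y) dy = 0 then h'(a+) > 0; consequently, in all cases h'(a−) < h'(a+) + ∫ₐ^∞ e^{−λ₁(y−a)} h''(y) dy. -/
open Real Filter Set

theorem right_side_inequality
    (a lam1 ℓ β : ℝ) (hlam1 : 0 < lam1) (hℓ : 0 < ℓ) (hβ : 0 < β)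
    (h h' h'' : ℝ → ℝ)
    (hconv : ConvexOn ℝ Set.univ h)
    (hcont : Continuous h)
    (hd1 : ∀ x ≠ a, HasDerivAt h (h' x) x)
    (hd2 : ∀ x ≠ a, HasDerivAt h' (h'' x) x)
    (hcont2 : ContinuousOn h'' {x | x ≠ a})
    (hneg : ∀ x < a, h' x ≤ 0) (hposd : ∀ x > a, 0 ≤ h' x)
    (ha : h a = 0)
    (hm hp : ℝ)
    (hlm : Tendsto h' (nhdsWithin a (Set.Iio a)) (nhds hm))
    (hlp : Tendsto h' (nhdsWithin a (Set.Ioi a)) (nhds hp))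
    (c : EReal) (hlimtop : Tendsto (fun x => (h' x : EReal)) atTop (nhds c))
    (hc : (ℓ * β : ℝ) < c)
    (hint : MeasureTheory.IntegrableOn (fun y => Real.exp (-lam1 * (y - a)) * h'' y) (Set.Ioi a)) :
    ((∫ y in Set.Ioi a, Real.exp (-lam1 * (y - a)) * h'' y) = 0 → 0 < hp) ∧
    hm < hp + ∫ y in Set.Ioi a, Real.exp (-lam1 * (y - a)) * h'' y := by
  -- h' is monotone on (a, ∞)
  have hmono : MonotoneOn h' (Set.Ioi a) := by
    have hc' : ConvexOn ℝ (Set.Ioi a) h := hconv.subset (subset_univ _) (convex_Ioi a)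
    have hmono := hc'.monotoneOn_deriv (fun x hx => (hd1 x (ne_of_gt hx)).differentiableAt)
    intro x hx y hy hxy
    rw [← (hd1 x (ne_of_gt hx)).deriv, ← (hd1 y (ne_of_gt hy)).deriv]
    exact hmono hx hy hxy
  -- h'' ≥ 0 on (a, ∞)
  have h2nonneg : ∀ x > a, 0 ≤ h'' x := by
    intro x hx
    have hs := hasDerivAt_iff_tendsto_slope.1 (hd2 x (ne_of_gt hx))
    have hs' : Tendsto (slope h' x) (nhdsWithin x (Set.Ioi x)) (nhds (h'' x)) :=
      hs.mono_left (nhdsWithin_mono x (fun y hy => ne_of_gt hy))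
    refine ge_of_tendsto hs' ?_
    filter_upwards [self_mem_nhdsWithin] with y hy
    have hxy : x < y := hy
    have : h' x ≤ h' y := hmono hx (lt_trans hx hxy) hxy.le
    have h1 : 0 ≤ (h' y - h' x) := by linarith
    have h2 : 0 ≤ (y - x)⁻¹ := inv_nonneg.2 (by linarith)
    exact mul_nonneg h2 h1
  -- integrand nonneg
  have hnn : ∀ y ∈ Set.Ioi a, 0 ≤ Real.exp (-lam1 * (y - a)) * h'' y := by
    intro y hy
    exact mul_nonneg (Real.exp_pos _).le (h2nonneg y hy)
  have hnnae : 0 ≤ᵐ[MeasureTheory.volume.restrict (Set.Ioi a)]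
      (fun y => Real.exp (-lam1 * (y - a)) * h'' y) := by
    filter_upwards [MeasureTheory.ae_restrict_mem measurableSet_Ioi] with y hy using hnn y hy
  have hInonneg : 0 ≤ ∫ y in Set.Ioi a, Real.exp (-lam1 * (y - a)) * h'' y :=
    MeasureTheory.setIntegral_nonneg measurableSet_Ioi hnn
  -- key claim: integral = 0 → hp > 0
  have key : (∫ y in Set.Ioi a, Real.exp (-lam1 * (y - a)) * h'' y) = 0 → 0 < hp := by
    intro hI0
    -- h'' = 0 on (a, ∞)
    have h2zero : ∀ x > a, h'' x = 0 := by
      intro x hx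
      by_contra hne
      have hpos : 0 < h'' x := lt_of_le_of_ne (h2nonneg x hx) (Ne.symm hne)
      -- the integrand is positive near x, so the integral is positive
      have hco : ContinuousAt h'' x := by
        have : IsOpen {x : ℝ | x ≠ a} := isOpen_compl_singleton
        exact hcont2.continuousAt (this.mem_nhds (ne_of_gt hx))
      have hev : ∀ᶠ y in nhds x, 0 < h'' y := hco.eventually (eventually_gt_nhds hpos)
      have hev2 : ∀ᶠ y in nhds x, 0 < h'' y ∧ a < y :=
        hev.and (eventually_gt_nhds hx)
      obtain ⟨ε, hε, hball⟩ := Metric.eventually_nhds_iff_ball.1 hev2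
      have hsub : Set.Ioo (x - ε) (x + ε) ⊆
          Function.support (fun y => Real.exp (-lam1 * (y - a)) * h'' y) ∩ Set.Ioi a := by
        intro y hy
        have hmem : y ∈ Metric.ball x ε := by
          rw [Metric.mem_ball, Real.dist_eq, abs_lt]
          constructor <;> [linarith [hy.1]; linarith [hy.2]]
        obtain ⟨h1, h2⟩ := hball y hmem
        refine ⟨?_, h2⟩
        simp only [Function.mem_support]
        exact ne_of_gt (mul_pos (Real.exp_pos _) h1)
      have hμ : 0 < MeasureTheory.volume
          (Function.support (fun y => Real.exp (-lam1 * (y - a)) * h'' y) ∩ Set.Ioi a) := by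
        refine lt_of_lt_of_le ?_ (MeasureTheory.measure_mono hsub)
        rw [Real.volume_Ioo]
        simp only [ENNReal.ofReal_pos]
        linarith
      have := (MeasureTheory.setIntegral_pos_iff_support_of_nonneg_ae hnnae hint).2 hμ
      rw [hI0] at this
      exact lt_irrefl 0 this
    -- h' is constant equal to hp on (a, ∞)
    have hconst : ∀ x > a, h' x = hp := by
      intro x hx
      have heq : ∀ t ∈ Set.Ioo a x, h' t = h' x := by
        intro t ht
        have hcc : ContinuousOn h' (Set.Icc t x) := by
          intro y hy
          exact ((hd2 y (ne_of_gt (lt_of_lt_of_le ht.1 hy.1))).continuousAt).continuousWithinAt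
        have hdz : ∀ y ∈ Set.Ico t x, HasDerivWithinAt h' 0 (Set.Ici y) y := by
          intro y hy
          have hya : a < y := lt_of_lt_of_le ht.1 hy.1
          have := (hd2 y (ne_of_gt hya)).hasDerivWithinAt (s := Set.Ici y)
          rwa [h2zero y hya] at this
        have := constant_of_has_deriv_right_zero hcc hdz x ⟨ht.2.le, le_refl x⟩
        exact this.symm
      -- take the limit t → a⁺
      have hev : ∀ᶠ t in nhdsWithin a (Set.Ioi a), h' t = h' x := by
        filter_upwards [Ioo_mem_nhdsGT_of_mem ⟨le_refl a, hx⟩] with t ht using heq t ht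
      have h1 : Tendsto h' (nhdsWithin a (Set.Ioi a)) (nhds (h' x)) :=
        tendsto_const_nhds.congr' (by filter_upwards [hev] with t ht using ht.symm)
      exact tendsto_nhds_unique h1 hlp
    -- so the limit at ∞ equals hp
    have h2 : Tendsto (fun x => (h' x : EReal)) atTop (nhds ((hp : ℝ) : EReal)) := by
      refine tendsto_const_nhds.congr' ?_
      filter_upwards [eventually_gt_atTop a] with x hx
      rw [hconst x hx]
    have hceq : c = ((hp : ℝ) : EReal) := tendsto_nhds_unique hlimtop h2
    rw [hceq] at hc
    have : ℓ * β < hp := by exact_mod_cast hc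
    nlinarith
  refine ⟨key, ?_⟩
  -- hm ≤ 0, 0 ≤ hp
  have hm0 : hm ≤ 0 := by
    refine le_of_tendsto hlm ?_
    filter_upwards [self_mem_nhdsWithin] with y hy using hneg y hy
  have hp0 : 0 ≤ hp := by
    refine ge_of_tendsto hlp ?_
    filter_upwards [self_mem_nhdsWithin] with y hy using hposd y hy
  rcases eq_or_lt_of_le hInonneg with hI | hI
  · have := key hI.symm
    rw [← hI]
    linarith
  · linarith
end

section
/- Under the stated hypotheses on h, h'(a−) − ∫_{−∞}^{a} e^{λ₂(y−a)} h''(y) dy < h'(a+). -/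
open Real Filter Set

theorem left_side_inequality
    (a lam2 k β : ℝ) (hlam2 : 0 < lam2) (hk : 0 < k) (hβ : 0 < β)
    (h h' h'' : ℝ → ℝ)
    (hconv : ConvexOn ℝ Set.univ h)
    (hcont : Continuous h)
    (hd1 : ∀ x ≠ a, HasDerivAt h (h' x) x)
    (hd2 : ∀ x ≠ a, HasDerivAt h' (h'' x) x)
    (hcont2 : ContinuousOn h'' {x | x ≠ a})
    (hneg : ∀ x < a, h' x ≤ 0) (hposd : ∀ x > a, 0 ≤ h' x)
    (ha : h a = 0)
    (hm hp : ℝ)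
    (hlm : Tendsto h' (nhdsWithin a (Set.Iio a)) (nhds hm))
    (hlp : Tendsto h' (nhdsWithin a (Set.Ioi a)) (nhds hp))
    (c : EReal) (hlimbot : Tendsto (fun x => (h' x : EReal)) atBot (nhds c))
    (hc : c < (-(k * β) : ℝ))
    (hint : MeasureTheory.IntegrableOn (fun y => Real.exp (lam2 * (y - a)) * h'' y) (Set.Iio a)) :
    hm - (∫ y in Set.Iio a, Real.exp (lam2 * (y - a)) * h'' y) < hp := by
  -- monotonicity of h' below a
  have hmono : ∀ x y : ℝ, x < y → y < a → h' x ≤ h' y := by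
    intro x y hxy hya
    have h1 : h' x ≤ slope h x y :=
      hconv.le_slope_of_hasDerivAt (mem_univ x) (mem_univ y) hxy (hd1 x (by linarith))
    have h2 : slope h x y ≤ h' y :=
      hconv.slope_le_of_hasDerivAt (mem_univ x) (mem_univ y) hxy (hd1 y hya.ne)
    linarith
  -- second derivative nonneg below a
  have h2nonneg : ∀ x ∈ Set.Iio a, 0 ≤ h'' x := by
    intro x hx
    have hx' : x < a := hx
    have hslope : Tendsto (slope h' x) (nhdsWithin x {x}ᶜ) (nhds (h'' x)) :=
      hasDerivAt_iff_tendsto_slope.mp (hd2 x hx'.ne)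
    have hslope' : Tendsto (slope h' x) (nhdsWithin x (Set.Ioi x)) (nhds (h'' x)) :=
      hslope.mono_left (nhdsWithin_mono x fun y hy => mem_compl_singleton_iff.mpr (ne_of_gt hy))
    refine ge_of_tendsto hslope' ?_
    filter_upwards [Ioo_mem_nhdsGT_of_mem ⟨le_refl x, hx'⟩] with y hy
    rw [slope_def_field]
    have := hmono x y hy.1 hy.2
    have : 0 ≤ h' y - h' x := by linarith
    exact div_nonneg this (by linarith [hy.1])
  have hm0 : hm ≤ 0 :=
    le_of_tendsto hlm (eventually_nhdsWithin_of_forall fun x hx => hneg x hx)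
  have hp0 : 0 ≤ hp :=
    ge_of_tendsto hlp (eventually_nhdsWithin_of_forall fun x hx => hposd x hx)
  have hgnonneg : ∀ y ∈ Set.Iio a, 0 ≤ Real.exp (lam2 * (y - a)) * h'' y :=
    fun y hy => mul_nonneg (Real.exp_pos _).le (h2nonneg y hy)
  have hintnonneg : 0 ≤ ∫ y in Set.Iio a, Real.exp (lam2 * (y - a)) * h'' y :=
    MeasureTheory.setIntegral_nonneg measurableSet_Iio hgnonneg
  rcases lt_or_eq_of_le hm0 with hmlt | hmeq
  · linarith
  · -- hm = 0; show the integral is strictly positive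
    -- find x0 < a with h' x0 < 0
    have hev : ∀ᶠ x in atBot, (h' x : EReal) < ((-(k * β) : ℝ) : EReal) :=
      hlimbot.eventually_lt_const hc
    obtain ⟨x0, hx0a, hx0v⟩ : ∃ x0, x0 < a ∧ h' x0 < -(k * β) := by
      rcases (hev.and (eventually_lt_atBot a)).exists with ⟨x0, hv, hxa⟩
      exact ⟨x0, hxa, by exact_mod_cast hv⟩
    have hx0neg : h' x0 < 0 := by nlinarith
    -- find x1 ∈ (x0, a) with h' x0 < h' x1
    obtain ⟨x1, hx1v, hx01, hx1a⟩ :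
        ∃ x1, h' x0 < h' x1 ∧ x0 < x1 ∧ x1 < a := by
      have h1 : ∀ᶠ y in nhdsWithin a (Set.Iio a), h' x0 < h' y :=
        hlm.eventually_const_lt (by rw [hmeq]; exact hx0neg)
      have h2 : ∀ᶠ y in nhdsWithin a (Set.Iio a), x0 < y :=
        eventually_nhdsWithin_of_eventually_nhds (eventually_gt_nhds hx0a)
      rcases ((h1.and h2).and self_mem_nhdsWithin).exists with ⟨x1, ⟨hv, hgt⟩, hlt⟩
      exact ⟨x1, hv, hgt, hlt⟩
    have hle : x0 ≤ x1 := hx01.le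
    have hIccsub : Set.Icc x0 x1 ⊆ Set.Iio a := fun y hy => lt_of_le_of_lt hy.2 hx1a
    have hcontOn : ContinuousOn h'' (Set.uIcc x0 x1) := by
      rw [uIcc_of_le hle]
      exact hcont2.mono fun y hy => (hIccsub hy).ne
    have hii : IntervalIntegrable h'' MeasureTheory.volume x0 x1 :=
      hcontOn.intervalIntegrable
    have hftc : ∫ y in x0..x1, h'' y = h' x1 - h' x0 := by
      refine intervalIntegral.integral_eq_sub_of_hasDerivAt ?_ hii
      intro y hy
      rw [uIcc_of_le hle] at hy
      exact hd2 y (hIccsub hy).ne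
    have hIocpos : 0 < ∫ y in Set.Ioc x0 x1, h'' y := by
      rw [← intervalIntegral.integral_of_le hle, hftc]; linarith
    set C := Real.exp (lam2 * (x0 - a)) with hC
    have hCpos : 0 < C := Real.exp_pos _
    have hIocsub : Set.Ioc x0 x1 ⊆ Set.Iio a := fun y hy => lt_of_le_of_lt hy.2 hx1a
    have hint1 : MeasureTheory.IntegrableOn
        (fun y => Real.exp (lam2 * (y - a)) * h'' y) (Set.Ioc x0 x1) :=
      hint.mono_set hIocsub
    have hint2 : MeasureTheory.IntegrableOn (fun y => C * h'' y) (Set.Ioc x0 x1) :=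
      hii.1.const_mul C
    have hstep : C * (∫ y in Set.Ioc x0 x1, h'' y)
        ≤ ∫ y in Set.Ioc x0 x1, Real.exp (lam2 * (y - a)) * h'' y := by
      rw [← MeasureTheory.integral_const_mul C]
      refine MeasureTheory.setIntegral_mono_on hint2 hint1 measurableSet_Ioc ?_
      intro y hy
      have h1 : C ≤ Real.exp (lam2 * (y - a)) := by
        apply Real.exp_le_exp.mpr
        nlinarith [hy.1]
      exact mul_le_mul_of_nonneg_right h1 (h2nonneg y (hIocsub hy))
    have hmonoint : (∫ y in Set.Ioc x0 x1, Real.exp (lam2 * (y - a)) * h'' y)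
        ≤ ∫ y in Set.Iio a, Real.exp (lam2 * (y - a)) * h'' y := by
      refine MeasureTheory.setIntegral_mono_set hint ?_ (HasSubset.Subset.eventuallyLE hIocsub)
      exact (MeasureTheory.ae_restrict_iff' measurableSet_Iio).mpr
        (Filter.Eventually.of_forall hgnonneg)
    have : 0 < ∫ y in Set.Iio a, Real.exp (lam2 * (y - a)) * h'' y := by
      have := mul_pos hCpos hIocpos
      linarith
    linarith
end

section
/- Let g : ℝ → ℝ be continuous with the structure: g = −k on (−∞, d*], g = ℓ on [u*, ∞), g ≤ −k on [d*, D*], g ≥ −k on [D*, u*], for constants d* < D* < u* and −k < ℓ. Define V̄(x) = V̄(x₀) + ∫_{x₀}^{x} g(z) dz for an antiderivative V̄ of g. Then for all y < x: V̄(y) − V̄(x) ≤ K + k(x − y), where K = −∫_{d*}^{D*} (g(z) + k) dz ≥ 0. -/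
open Real Filter Set intervalIntegral

theorem lower_bound_K_inequality
    (dstar Dstar ustar k ℓ K : ℝ)
    (hdD : dstar < Dstar) (hDu : Dstar < ustar) (hkl : -k < ℓ)
    (g : ℝ → ℝ) (hcont : Continuous g)
    (hleft : ∀ x ≤ dstar, g x = -k)
    (hright : ∀ x ≥ ustar, g x = ℓ)
    (hlow : ∀ x ∈ Set.Icc dstar Dstar, g x ≤ -k)
    (hhigh : ∀ x ∈ Set.Icc Dstar ustar, -k ≤ g x)
    (Vbar : ℝ → ℝ)
    (hV : ∀ x, HasDerivAt Vbar (g x) x)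
    (hK : K = -∫ z in dstar..Dstar, (g z + k)) :
    0 ≤ K ∧ ∀ y x : ℝ, y < x → Vbar y - Vbar x ≤ K + k * (x - y) := by
  set h : ℝ → ℝ := fun z => g z + k with hh
  have hcont_h : Continuous h := hcont.add continuous_const
  set hn : ℝ → ℝ := fun z => min (h z) 0 with hhn
  have hcont_hn : Continuous hn := hcont_h.min continuous_const
  have hn_nonpos : ∀ z, hn z ≤ 0 := fun z => min_le_right _ _
  have hn_le : ∀ z, hn z ≤ h z := fun z => min_le_left _ _
  have hn_zero_left : ∀ z ≤ dstar, hn z = 0 := by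
    intro z hz
    simp [hhn, hh, hleft z hz]
  have h_nonneg_right : ∀ z ≥ Dstar, 0 ≤ h z := by
    intro z hz
    rcases le_or_gt z ustar with h1 | h1
    · have := hhigh z ⟨hz, h1⟩
      simp only [hh]; linarith
    · have := hright z h1.le
      simp only [hh, this]; linarith
  have hn_zero_right : ∀ z ≥ Dstar, hn z = 0 := fun z hz =>
    min_eq_right (h_nonneg_right z hz)
  have hn_eq_mid : ∀ z ∈ Set.uIcc dstar Dstar, hn z = h z := by
    intro z hz
    rw [Set.uIcc_of_le hdD.le] at hz
    have := hlow z hz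
    exact min_eq_left (by simp only [hh]; linarith)
  have hmidnonpos : (∫ z in dstar..Dstar, h z) ≤ 0 := by
    have h0 : (∫ z in dstar..Dstar, (0 : ℝ)) = 0 := by simp
    calc (∫ z in dstar..Dstar, h z)
        ≤ ∫ z in dstar..Dstar, (0 : ℝ) := by
          apply intervalIntegral.integral_mono_on hdD.le
            (hcont_h.intervalIntegrable _ _) (_root_.intervalIntegrable_const)
          intro z hz
          have := hlow z hz
          simp only [hh]; linarith
      _ = 0 := h0
  have key : ∀ y x : ℝ, y ≤ x → (∫ z in dstar..Dstar, h z) ≤ ∫ z in y..x, h z := by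
    intro y x hyx
    set a := min y dstar with ha
    set b := max x Dstar with hb
    have hay : a ≤ y := min_le_left _ _
    have had : a ≤ dstar := min_le_right _ _
    have hxb : x ≤ b := le_max_left _ _
    have hDb : Dstar ≤ b := le_max_right _ _
    have IInt : ∀ u v : ℝ, IntervalIntegrable hn MeasureTheory.volume u v :=
      fun u v => hcont_hn.intervalIntegrable u v
    have zero1 : (∫ z in a..dstar, hn z) = 0 := by
      rw [intervalIntegral.integral_congr (g := fun _ => (0:ℝ))
        (fun z hz => by
          rw [Set.uIcc_of_le had] at hz
          exact hn_zero_left z hz.2)]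
      simp
    have zero2 : (∫ z in Dstar..b, hn z) = 0 := by
      rw [intervalIntegral.integral_congr (g := fun _ => (0:ℝ))
        (fun z hz => by
          rw [Set.uIcc_of_le hDb] at hz
          exact hn_zero_right z hz.1)]
      simp
    have split1 : (∫ z in a..dstar, hn z) + (∫ z in dstar..Dstar, hn z)
        + (∫ z in Dstar..b, hn z) = ∫ z in a..b, hn z := by
      rw [intervalIntegral.integral_add_adjacent_intervals (IInt a dstar) (IInt dstar Dstar),
        intervalIntegral.integral_add_adjacent_intervals (IInt a Dstar) (IInt Dstar b)]
    have eq1 : (∫ z in a..b, hn z) = ∫ z in dstar..Dstar, h z := by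
      rw [← split1, zero1, zero2, intervalIntegral.integral_congr hn_eq_mid]
      ring
    have split2 : (∫ z in a..y, hn z) + (∫ z in y..x, hn z)
        + (∫ z in x..b, hn z) = ∫ z in a..b, hn z := by
      rw [intervalIntegral.integral_add_adjacent_intervals (IInt a y) (IInt y x),
        intervalIntegral.integral_add_adjacent_intervals (IInt a x) (IInt x b)]
    have np1 : (∫ z in a..y, hn z) ≤ 0 := by
      calc (∫ z in a..y, hn z) ≤ ∫ z in a..y, (0:ℝ) :=
            intervalIntegral.integral_mono_on hay (IInt a y)
              (_root_.intervalIntegrable_const) (fun z _ => hn_nonpos z)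
        _ = 0 := by simp
    have np2 : (∫ z in x..b, hn z) ≤ 0 := by
      calc (∫ z in x..b, hn z) ≤ ∫ z in x..b, (0:ℝ) :=
            intervalIntegral.integral_mono_on hxb (IInt x b)
              (_root_.intervalIntegrable_const) (fun z _ => hn_nonpos z)
        _ = 0 := by simp
    have step1 : (∫ z in dstar..Dstar, h z) ≤ ∫ z in y..x, hn z := by
      rw [← eq1, ← split2]; linarith
    have step2 : (∫ z in y..x, hn z) ≤ ∫ z in y..x, h z :=
      intervalIntegral.integral_mono_on hyx (IInt y x)
        (hcont_h.intervalIntegrable y x) (fun z _ => hn_le z)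
    linarith
  constructor
  · rw [hK]; simpa only [hh] using neg_nonneg.mpr hmidnonpos
  · intro y x hyx
    have ftc : (∫ z in y..x, g z) = Vbar x - Vbar y :=
      intervalIntegral.integral_eq_sub_of_hasDerivAt (fun t _ => hV t)
        (hcont.intervalIntegrable y x)
    have hsplit : (∫ z in y..x, h z) = (∫ z in y..x, g z) + k * (x - y) := by
      simp only [hh]
      rw [intervalIntegral.integral_add (hcont.intervalIntegrable y x)
        (_root_.intervalIntegrable_const)]
      simp [mul_comm]
    have := key y x hyx.le
    have hKh : K = -∫ z in dstar..Dstar, h z := by simpa only [hh] using hK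
    rw [hKh]
    rw [hsplit, ftc] at this
    linarith
end
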